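/- For any chain ∅ = μ⁰ ⊆ μ¹ ⊆ ⋯ ⊆ μ^k = μ of partitions in which each μ^j/μ^{j-1} is a horizontal strip of size ν_j, one has ∏_{j=1}^k θ_{μ^j/μ^{j-1}}(q) = (∏_{j=1}^k [ν_j]_q! / ∏_{i≥1} [μ_i − μ_{i+1}]_q!) · ∏_{j=1}^k ψ_{μ^j/μ^{j-1}}(q). -/

import Mathlib

open Finset
open scoped Classical

/-- The `q`-analog `[n]_q = 1 + q + ⋯ + q^{n-1}` as a rational function in `q`. -/
noncomputable def qInt (n : ℕ) : RatFunc ℚ := ∑ i ∈ Finset.range n, RatFunc.X ^ i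

/-- The `q`-factorial `[n]_q!`. -/
noncomputable def qFact : ℕ → RatFunc ℚ
  | 0 => 1
  | n + 1 => qFact n * qInt (n + 1)

/-- The Gaussian binomial coefficient `[a choose b]_q`. -/
noncomputable def qBinom (a b : ℕ) : RatFunc ℚ :=
  if b ≤ a then qFact a / (qFact b * qFact (a - b)) else 0

/-- A function `μ : ℕ → ℕ` is an integer partition (0-indexed parts, trailing zeros). -/
def IsPartitionFun (μ : ℕ → ℕ) : Prop :=
  (∀ i, μ (i + 1) ≤ μ i) ∧ ∃ N, ∀ i, N ≤ i → μ i = 0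

/-- The size `|μ|` of a partition. -/
noncomputable def psize (μ : ℕ → ℕ) : ℕ := ∑ᶠ i, μ i

/-- `μ/ρ` is a horizontal strip: `ρ ⊆ μ` and `μ_{i+1} ≤ ρ_i` for all `i`. -/
def IsHorizStrip (ρ μ : ℕ → ℕ) : Prop :=
  (∀ i, ρ i ≤ μ i) ∧ ∀ i, μ (i + 1) ≤ ρ i

/-- `θ_{μ/ρ}(q) = ([|μ|−|ρ|]_q!/[μ₁−ρ₁]_q!) ∏_{i≥1} [ρ_i−ρ_{i+1} choose μ_{i+1}−ρ_{i+1}]_q`. -/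
noncomputable def theta (μ ρ : ℕ → ℕ) : RatFunc ℚ :=
  (qFact (psize μ - psize ρ) / qFact (μ 0 - ρ 0)) *
    ∏ᶠ i : ℕ, qBinom (ρ i - ρ (i + 1)) (μ (i + 1) - ρ (i + 1))

/-- `ψ_{μ/ρ}(q) = ∏_{i≥1} [μ_i−μ_{i+1} choose μ_i−ρ_i]_q`. -/
noncomputable def psiStrip (μ ρ : ℕ → ℕ) : RatFunc ℚ :=
  ∏ᶠ i : ℕ, qBinom (μ i - μ (i + 1)) (μ i - ρ i)

/-- The chain condition: `∅ = c 0 ⊆ c 1 ⊆ ⋯ ⊆ c k = μ` with each `c (j+1) / c j` a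
horizontal strip of size `ν j`. -/
def IsStripChain (μ ν : ℕ → ℕ) (k : ℕ) (c : Fin (k + 1) → ℕ → ℕ) : Prop :=
  (∀ i, c 0 i = 0) ∧ (∀ i, c (Fin.last k) i = μ i) ∧
  (∀ j : Fin (k + 1), IsPartitionFun (c j)) ∧
  (∀ j : Fin k, IsHorizStrip (c j.castSucc) (c j.succ) ∧
    psize (c j.succ) = psize (c j.castSucc) + ν j.val)

/-- `b_{μν}(q)`: sum over all chains of partitions from `∅` to `μ` with horizontal strips
of sizes `ν 0, …, ν (k-1)` of the product of the `θ` weights. -/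
noncomputable def bPoly (μ ν : ℕ → ℕ) (k : ℕ) : RatFunc ℚ :=
  ∑ᶠ c : Fin (k + 1) → ℕ → ℕ,
    if IsStripChain μ ν k c then ∏ j : Fin k, theta (c j.succ) (c j.castSucc) else 0

/-!
Expanding the Gaussian binomials into `q`-factorials, a single horizontal strip satisfies
`θ_{λ/ρ} = [|λ| - |ρ|]! · (G ρ / G λ) · ψ_{λ/ρ}` with `G μ = ∏_i [μ_i - μ_{i+1}]!`: index by
index the two binomials differ by `[ρ_i - ρ_{i+1}]! / [λ_i - λ_{i+1}]!` times
`[λ_i - ρ_i]! / [λ_{i+1} - ρ_{i+1}]!`, and the latter telescopes to the `[λ_1 - ρ_1]!` in the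
denominator of `θ`. Along a chain starting at `∅` the ratios `G (μ^{j-1}) / G (μ^j)` telescope
to `1 / G μ`.
-/

theorem finprod_eq_prod_range_of_eq_one {M : Type*} [CommMonoid M] {f : ℕ → M} {N : ℕ}
    (h : ∀ i, N ≤ i → f i = 1) : ∏ᶠ i, f i = ∏ i ∈ range N, f i := by
  refine finprod_eq_prod_of_mulSupport_subset f fun i hi => ?_
  by_contra hiN
  exact hi (h i (by simpa using hiN))

theorem Fin.prod_univ_castSucc_div_succ {G : Type*} [CommGroupWithZero G] :
    ∀ {n : ℕ} (f : Fin (n + 1) → G), (∀ i, f i ≠ 0) →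
      ∏ i : Fin n, f i.castSucc / f i.succ = f 0 / f (Fin.last n)
  | 0, f, hf => by simp [div_self (hf 0)]
  | n + 1, f, hf => by
    have ih := Fin.prod_univ_castSucc_div_succ (fun i => f i.castSucc) fun i => hf _
    rw [Fin.castSucc_zero] at ih
    rw [Fin.prod_univ_castSucc]
    simp only [Fin.succ_castSucc]
    rw [ih, Fin.succ_last, div_mul_div_cancel₀ (hf _)]

theorem Finset.prod_range_div_succ {G : Type*} [CommGroupWithZero G] {f : ℕ → G}
    (hf : ∀ i, f i ≠ 0) (n : ℕ) : ∏ i ∈ range n, f i / f (i + 1) = f 0 / f n := by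
  induction n with
  | zero => simp [div_self (hf 0)]
  | succ n ih => rw [prod_range_succ, ih, div_mul_div_cancel₀ (hf n)]

lemma qInt_ne_zero {n : ℕ} (hn : 0 < n) : qInt n ≠ 0 := by
  have hpoly :
      qInt n = algebraMap (Polynomial ℚ) (RatFunc ℚ) (∑ i ∈ range n, Polynomial.X ^ i) := by
    simp [qInt, RatFunc.algebraMap_X]
  rw [hpoly, Ne, map_eq_zero_iff _ (RatFunc.algebraMap_injective ℚ)]
  intro hzero
  have := congrArg (Polynomial.eval 1) hzero
  simp only [Polynomial.eval_finsetSum, Polynomial.eval_pow, Polynomial.eval_X, one_pow,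
    sum_const, card_range, nsmul_eq_mul, mul_one, Polynomial.eval_zero, Nat.cast_eq_zero] at this
  omega

lemma qFact_ne_zero (n : ℕ) : qFact n ≠ 0 := by
  induction n with
  | zero => exact one_ne_zero
  | succ n ih => exact mul_ne_zero ih (qInt_ne_zero n.succ_pos)

lemma qBinom_of_le {a b : ℕ} (h : b ≤ a) : qBinom a b = qFact a / (qFact b * qFact (a - b)) :=
  if_pos h

lemma qBinom_zero_right (a : ℕ) : qBinom a 0 = 1 := by
  rw [qBinom_of_le a.zero_le, Nat.sub_zero, qFact, one_mul, div_self (qFact_ne_zero a)]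

-- Both sides equal `[r - r']! / ([l' - r']! [r - l']!)`.
lemma qBinom_exchange {l l' r r' : ℕ} (h₁ : r' ≤ l') (h₂ : l' ≤ r) (h₃ : r ≤ l) :
    qBinom (r - r') (l' - r') =
      qBinom (l - l') (l - r) * (qFact (r - r') / qFact (l - l')) *
        (qFact (l - r) / qFact (l' - r')) := by
  rw [qBinom_of_le (by omega), qBinom_of_le (by omega),
    show r - r' - (l' - r') = r - l' by omega, show l - l' - (l - r) = r - l' by omega]
  have := qFact_ne_zero (l - l')
  have := qFact_ne_zero (l' - r')
  have := qFact_ne_zero (l - r)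
  have := qFact_ne_zero (r - l')
  field_simp

noncomputable def qFactGaps (μ : ℕ → ℕ) : RatFunc ℚ := ∏ᶠ i, qFact (μ i - μ (i + 1))

lemma qFactGaps_ne_zero (μ : ℕ → ℕ) : qFactGaps μ ≠ 0 :=
  finprod_ne_zero fun _ => qFact_ne_zero _

lemma qFactGaps_zero : qFactGaps (fun _ => 0) = 1 :=
  finprod_eq_one_of_forall_eq_one fun _ => rfl

theorem theta_eq_mul_psiStrip {μ ρ : ℕ → ℕ} (hs : IsHorizStrip ρ μ) {N : ℕ}
    (hN : ∀ i, N ≤ i → μ i = 0) :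
    theta μ ρ = qFact (psize μ - psize ρ) * (qFactGaps ρ / qFactGaps μ) * psiStrip μ ρ := by
  obtain ⟨hle, hinter⟩ := hs
  have hρN : ∀ i, N ≤ i → ρ i = 0 := fun i hi => Nat.eq_zero_of_le_zero (hN i hi ▸ hle i)
  have htail : ∀ i, N ≤ i → μ i = 0 ∧ μ (i + 1) = 0 ∧ ρ i = 0 ∧ ρ (i + 1) = 0 := fun i hi =>
    ⟨hN i hi, hN _ (by omega), hρN i hi, hρN _ (by omega)⟩
  have hexchange : ∀ i, qBinom (ρ i - ρ (i + 1)) (μ (i + 1) - ρ (i + 1)) =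
      qBinom (μ i - μ (i + 1)) (μ i - ρ i) *
        (qFact (ρ i - ρ (i + 1)) / qFact (μ i - μ (i + 1))) *
        (qFact (μ i - ρ i) / qFact (μ (i + 1) - ρ (i + 1))) := fun i =>
    qBinom_exchange (hle (i + 1)) (hinter i) (hle i)
  rw [theta, psiStrip, qFactGaps, qFactGaps]
  repeat rw [finprod_eq_prod_range_of_eq_one (N := N) fun i hi => by
    obtain ⟨h₁, h₂, h₃, h₄⟩ := htail i hi
    simp [h₁, h₂, h₃, h₄, qBinom_zero_right, qFact]]
  simp only [hexchange, prod_mul_distrib]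
  rw [prod_range_div_succ (f := fun i => qFact (μ i - ρ i)) (fun _ => qFact_ne_zero _),
    prod_div_distrib, (htail N le_rfl).1, (htail N le_rfl).2.2.1,
    Nat.sub_self, qFact, div_one]
  have := qFact_ne_zero (μ 0 - ρ 0)
  field_simp

/-- For any chain `∅ = c 0 ⊆ ⋯ ⊆ c k = μ` of partitions with `c (j+1)/c j` a horizontal
strip of size `ν j`, one has
`∏_j θ_{c(j+1)/c j}(q) = (∏_j [ν_j]_q! / ∏_i [μ_i − μ_{i+1}]_q!) ⋅ ∏_j ψ_{c(j+1)/c j}(q)`. -/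
theorem prod_theta_eq_prod_psi (k : ℕ) (μ ν : ℕ → ℕ)
    (c : Fin (k + 1) → ℕ → ℕ) (hc : IsStripChain μ ν k c) :
    ∏ j : Fin k, theta (c j.succ) (c j.castSucc) =
      ((∏ j ∈ Finset.range k, qFact (ν j)) / ∏ᶠ i : ℕ, qFact (μ i - μ (i + 1))) *
        ∏ j : Fin k, psiStrip (c j.succ) (c j.castSucc) := by
  obtain ⟨hfirst, hlast, hpart, hstep⟩ := hc
  have htheta : ∀ j : Fin k, theta (c j.succ) (c j.castSucc) =
      qFact (ν j) * (qFactGaps (c j.castSucc) / qFactGaps (c j.succ)) *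
        psiStrip (c j.succ) (c j.castSucc) := by
    intro j
    obtain ⟨N, hN⟩ := (hpart j.succ).2
    rw [theta_eq_mul_psiStrip (hstep j).1 hN, (hstep j).2, Nat.add_sub_cancel_left]
  rw [prod_congr rfl fun j _ => htheta j, prod_mul_distrib, prod_mul_distrib,
    Fin.prod_univ_castSucc_div_succ (fun j => qFactGaps (c j)) fun _ => qFactGaps_ne_zero _,
    Fin.prod_univ_eq_prod_range (fun j => qFact (ν j)), funext hfirst, funext hlast,
    qFactGaps_zero, qFactGaps, one_div, div_eq_mul_inv]
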